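/- For every integer d ≥ 2, (1/π)·∫_{−π}^{π} φ²·u_d(φ) dφ ≤ π⁴/(4(d+2)²). -/

import Mathlib

/-!
With `α = π / (d + 2)`, the damping factor `ρ_{j,d}` is `2 / (d + 2)` times the lag-`j`
autocorrelation of the coefficients `sin ((m + 1) α)`, `m = 0, …, d` (product-to-sum turns the
autocorrelation into a telescoping sum, and `(d + 2) α = π` closes it up). Hence
`(d + 2) u_d(φ) = |∑ₘ sin ((m + 1) α) e^{imφ}|² ≥ 0`. On `[-π, π]` we have
`φ² ≤ (π² / 2) (1 - cos φ)`, and by orthogonality `∫ u_d = π` and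
`∫ cos φ · u_d = π ρ_{1,d} = π cos α`, so the second moment is at most
`(π² / 2) (1 - cos α) ≤ π² α² / 4`.
-/

open Real

/-- The Jackson damping factor `ρ_{j,d}`. -/
noncomputable def jacksonDamp (d j : ℕ) : ℝ :=
  Real.sin ((j + 1) * (π / (d + 2))) / ((d + 2) * Real.sin (π / (d + 2)))
    + (1 - (j + 1) / (d + 2)) * Real.cos (j * (π / (d + 2)))

/-- The Jackson kernel `u_d(φ) = 1/2 + Σ_{j=1}^d ρ_{j,d} cos(jφ)`. -/
noncomputable def jacksonKernel (d : ℕ) (φ : ℝ) : ℝ :=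
  1 / 2 + ∑ j ∈ Finset.Icc 1 d, jacksonDamp d j * Real.cos (j * φ)

open Finset

theorem sum_range_sum_range_eq_sum_diag_add_sum_lt {M : Type*} [AddCommMonoid M]
    (f : ℕ → ℕ → M) (N : ℕ) :
    ∑ m ∈ range N, ∑ n ∈ range N, f m n
      = ∑ n ∈ range N, f n n + ∑ m ∈ range N, ∑ n ∈ range m, (f m n + f n m) := by
  induction N with
  | zero => simp
  | succ N ih =>
    simp only [sum_range_succ, sum_add_distrib, ih]
    abel

theorem sum_range_sum_range_lt_eq_sum_lags {M : Type*} [AddCommMonoid M] (g : ℕ → ℕ → M)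
    (N : ℕ) :
    ∑ m ∈ range (N + 1), ∑ n ∈ range m, g m n
      = ∑ j ∈ Icc 1 N, ∑ n ∈ range (N + 1 - j), g (n + j) n := by
  rw [sum_sigma', sum_sigma']
  refine sum_nbij' (fun p ↦ ⟨p.1 - p.2, p.2⟩) (fun p ↦ ⟨p.2 + p.1, p.2⟩)
    ?_ ?_ ?_ ?_ ?_ <;>
    simp only [mem_sigma, mem_range, mem_Icc, Sigma.forall, Sigma.mk.injEq, heq_eq_eq,
      and_true] <;>
    intro m n h <;>
    first | omega | rw [Nat.add_sub_cancel' h.2.le]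

theorem sq_sum_mul_cos_add_sq_sum_mul_sin (a : ℕ → ℝ) (φ : ℝ) (N : ℕ) :
    (∑ m ∈ range (N + 1), a m * cos (m * φ)) ^ 2
        + (∑ m ∈ range (N + 1), a m * sin (m * φ)) ^ 2
      = ∑ n ∈ range (N + 1), a n ^ 2
        + ∑ j ∈ Icc 1 N, 2 * (∑ n ∈ range (N + 1 - j), a n * a (n + j)) * cos (j * φ) := by
  have hsquare : (∑ m ∈ range (N + 1), a m * cos (m * φ)) ^ 2
      + (∑ m ∈ range (N + 1), a m * sin (m * φ)) ^ 2
      = ∑ m ∈ range (N + 1), ∑ n ∈ range (N + 1), a m * a n * cos (m * φ - n * φ) := by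
    simp only [sq, sum_mul_sum, ← sum_add_distrib, cos_sub]
    refine sum_congr rfl fun m _ ↦ sum_congr rfl fun n _ ↦ ?_
    ring
  rw [hsquare, sum_range_sum_range_eq_sum_diag_add_sum_lt, sum_range_sum_range_lt_eq_sum_lags]
  simp only [sub_self, cos_zero, mul_one, sq, mul_sum, sum_mul]
  congr 1
  refine sum_congr rfl fun j _ ↦ sum_congr rfl fun n _ ↦ ?_
  rw [← cos_neg ((n:ℝ) * φ - ↑(n + j) * φ)]
  push_cast
  ring_nf

theorem two_mul_sin_mul_sum_range_sin_mul_sin (α : ℝ) (j K : ℕ) :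
    2 * sin α * ∑ n ∈ range K, sin ((n + 1) * α) * sin ((n + j + 1) * α)
      = K * sin α * cos (j * α) - (sin ((2 * K + j + 1) * α) - sin ((j + 1) * α)) / 2 := by
  induction K with
  | zero => simp
  | succ K ih =>
    have hprod : 2 * sin ((K + 1) * α) * sin ((K + j + 1) * α)
        = cos (j * α) - cos ((2 * K + j + 2) * α) := by
      rw [two_mul_sin_mul_sin, ← cos_neg (j * α)]
      ring_nf
    rw [sum_range_succ, mul_add, ih,
      show (2 * ((K + 1 : ℕ) : ℝ) + j + 1) * α = (2 * K + j + 2) * α + α by push_cast; ring,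
      show (2 * (K : ℝ) + j + 1) * α = (2 * K + j + 2) * α - α by ring, sin_add, sin_sub]
    push_cast
    linear_combination sin α * hprod

theorem integral_cos_int_mul (k : ℤ) :
    ∫ x in (-π)..π, cos (k * x) = if k = 0 then 2 * π else 0 := by
  split_ifs with hk
  · simp only [hk, Int.cast_zero, zero_mul, cos_zero, intervalIntegral.integral_const,
      smul_eq_mul, mul_one]
    ring
  · have hk' : (k : ℝ) ≠ 0 := Int.cast_ne_zero.2 hk
    rw [intervalIntegral.integral_comp_mul_left cos hk', integral_cos, mul_neg, sin_neg,
      sin_int_mul_pi]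
    simp

theorem integral_cos_mul_cos_nat_mul (n : ℕ) :
    ∫ x in (-π)..π, cos x * cos (n * x) = if n = 1 then π else 0 := by
  have h : ∀ x, cos x * cos (n * x)
      = cos (((1 - n : ℤ) : ℝ) * x) / 2 + cos (((1 + n : ℤ) : ℝ) * x) / 2 := fun x ↦ by
    push_cast
    rw [sub_mul, add_mul, one_mul]
    linear_combination (two_mul_cos_mul_cos x (n * x)) / 2
  simp_rw [h]
  rw [intervalIntegral.integral_add (Continuous.intervalIntegrable (by fun_prop) _ _)
    (Continuous.intervalIntegrable (by fun_prop) _ _), intervalIntegral.integral_div,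
    intervalIntegral.integral_div, integral_cos_int_mul, integral_cos_int_mul]
  rw [if_neg (by omega : (1 + n : ℤ) ≠ 0)]
  simp only [sub_eq_zero, eq_comm (a := (1 : ℤ)), Nat.cast_eq_one]
  split_ifs <;> ring

theorem sq_le_pi_sq_div_two_mul_one_sub_cos {x : ℝ} (hx : |x| ≤ π) :
    x ^ 2 ≤ π ^ 2 / 2 * (1 - cos x) :=
  calc x ^ 2 = π ^ 2 / 2 * (2 / π ^ 2 * x ^ 2) := by field_simp
    _ ≤ π ^ 2 / 2 * (1 - cos x) := by gcongr; linarith [cos_le_one_sub_mul_cos_sq hx]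

theorem sin_pi_div_nat_add_two_pos (d : ℕ) : 0 < sin (π / (d + 2)) :=
  sin_pos_of_pos_of_lt_pi (by positivity) (div_lt_self pi_pos (by norm_cast; omega))

theorem sum_range_sin_mul_sin_eq_jacksonDamp (d j : ℕ) (hj : j ≤ d) :
    ∑ n ∈ range (d + 1 - j), sin ((n + 1) * (π / (d + 2))) * sin ((n + j + 1) * (π / (d + 2)))
      = (d + 2) / 2 * jacksonDamp d j := by
  set α := π / (d + 2) with hα
  have hsin : sin α ≠ 0 := (sin_pi_div_nat_add_two_pos d).ne'
  have hsum := two_mul_sin_mul_sum_range_sin_mul_sin α j (d + 1 - j)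
  have hK : ((d + 1 - j : ℕ) : ℝ) = d + 1 - j := by
    rw [Nat.cast_sub (by omega)]; push_cast; ring
  have hwrap : sin ((2 * ((d + 1 - j : ℕ) : ℝ) + j + 1) * α) = - sin ((j + 1) * α) := by
    rw [hK, show (2 * ((d:ℝ) + 1 - j) + j + 1) * α = 2 * π - (j + 1) * α by
      rw [hα]; field_simp; ring, sin_two_pi_sub]
  rw [hwrap, hK] at hsum
  generalize ∑ n ∈ range (d + 1 - j), sin ((n + 1) * α) * sin ((n + j + 1) * α) = S
    at hsum ⊢
  unfold jacksonDamp
  rw [← hα]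
  field_simp
  linear_combination hsum

theorem jacksonDamp_zero (d : ℕ) : jacksonDamp d 0 = 1 := by
  have := (sin_pi_div_nat_add_two_pos d).ne'
  unfold jacksonDamp
  simp only [Nat.cast_zero, zero_mul, cos_zero, zero_add]
  field_simp
  ring

theorem jacksonDamp_one (d : ℕ) : jacksonDamp d 1 = cos (π / (d + 2)) := by
  have := (sin_pi_div_nat_add_two_pos d).ne'
  unfold jacksonDamp
  rw [Nat.cast_one, one_add_one_eq_two, sin_two_mul]
  field_simp
  ring

theorem jacksonKernel_eq_sq_add_sq (d : ℕ) (φ : ℝ) :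
    (d + 2) * jacksonKernel d φ
      = (∑ m ∈ range (d + 1), sin ((m + 1) * (π / (d + 2))) * cos (m * φ)) ^ 2
        + (∑ m ∈ range (d + 1), sin ((m + 1) * (π / (d + 2))) * sin (m * φ)) ^ 2 := by
  rw [sq_sum_mul_cos_add_sq_sum_mul_sin (fun m ↦ sin ((m + 1) * (π / (d + 2)))),
    jacksonKernel, mul_add, mul_sum]
  congr 1
  · have h := sum_range_sin_mul_sin_eq_jacksonDamp d 0 (Nat.zero_le d)
    simp only [jacksonDamp_zero, Nat.sub_zero, Nat.cast_zero, add_zero, mul_one] at h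
    simp only [sq, h]
    ring
  · refine sum_congr rfl fun j hj ↦ ?_
    push_cast
    rw [sum_range_sin_mul_sin_eq_jacksonDamp d j (mem_Icc.1 hj).2]
    ring

theorem jacksonKernel_nonneg (d : ℕ) (φ : ℝ) : 0 ≤ jacksonKernel d φ := by
  have h := jacksonKernel_eq_sq_add_sq d φ
  have : 0 ≤ (d + 2 : ℝ) * jacksonKernel d φ := h ▸ by positivity
  exact nonneg_of_mul_nonneg_right this (by positivity)

@[fun_prop]
theorem continuous_jacksonKernel (d : ℕ) : Continuous (jacksonKernel d) := by
  unfold jacksonKernel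
  fun_prop

theorem integral_jacksonKernel (d : ℕ) : ∫ φ in (-π)..π, jacksonKernel d φ = π := by
  have hterm : ∀ j ∈ Icc 1 d, ∫ φ in (-π)..π, jacksonDamp d j * cos (j * φ) = 0 := by
    intro j hj
    have h := integral_cos_int_mul j
    rw [if_neg (by have := (mem_Icc.1 hj).1; omega), Int.cast_natCast] at h
    rw [intervalIntegral.integral_const_mul, h, mul_zero]
  unfold jacksonKernel
  rw [intervalIntegral.integral_add intervalIntegrable_const
      (Continuous.intervalIntegrable (by fun_prop) _ _),
    intervalIntegral.integral_finsetSum fun j _ ↦ Continuous.intervalIntegrable (by fun_prop) _ _,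
    sum_congr rfl hterm]
  simp only [intervalIntegral.integral_const, smul_eq_mul, sum_const_zero, add_zero]
  ring

theorem integral_cos_mul_jacksonKernel (d : ℕ) :
    ∫ φ in (-π)..π, cos φ * jacksonKernel d φ = π * cos (π / (d + 2)) := by
  have hterm : ∀ j ∈ Icc 1 d, ∫ φ in (-π)..π, cos φ * (jacksonDamp d j * cos (j * φ))
      = if j = 1 then π * jacksonDamp d 1 else 0 := by
    intro j _
    simp_rw [mul_left_comm (cos _)]
    rw [intervalIntegral.integral_const_mul, integral_cos_mul_cos_nat_mul]
    split_ifs with h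
    · rw [h, mul_comm]
    · rw [mul_zero]
  unfold jacksonKernel
  simp_rw [mul_add, mul_sum]
  rw [intervalIntegral.integral_add (Continuous.intervalIntegrable (by fun_prop) _ _)
      (Continuous.intervalIntegrable (by fun_prop) _ _),
    intervalIntegral.integral_finsetSum fun j _ ↦ Continuous.intervalIntegrable (by fun_prop) _ _,
    sum_congr rfl hterm, sum_ite_eq', intervalIntegral.integral_mul_const, integral_cos]
  rcases Nat.eq_zero_or_pos d with rfl | hd
  · simp -- the sum is empty and `cos (π / 2) = 0`
  · simp [hd.ne', jacksonDamp_one]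

theorem integral_one_sub_cos_mul_jacksonKernel (d : ℕ) :
    ∫ φ in (-π)..π, (1 - cos φ) * jacksonKernel d φ = π - π * cos (π / (d + 2)) := by
  simp_rw [sub_mul, one_mul]
  rw [intervalIntegral.integral_sub (Continuous.intervalIntegrable (by fun_prop) _ _)
    (Continuous.intervalIntegrable (by fun_prop) _ _), integral_jacksonKernel,
    integral_cos_mul_jacksonKernel]

theorem jacksonKernel_second_moment_general (d : ℕ) :
    (1 / π) * ∫ φ in (-π)..π, φ ^ 2 * jacksonKernel d φ ≤ π ^ 4 / (4 * (d + 2) ^ 2) := by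
  have hmono : ∫ φ in (-π)..π, φ ^ 2 * jacksonKernel d φ
      ≤ ∫ φ in (-π)..π, π ^ 2 / 2 * ((1 - cos φ) * jacksonKernel d φ) := by
    refine intervalIntegral.integral_mono_on (by linarith [pi_pos])
      (Continuous.intervalIntegrable (by fun_prop) _ _)
      (Continuous.intervalIntegrable (by fun_prop) _ _) fun φ hφ ↦ ?_
    rw [← mul_assoc]
    exact mul_le_mul_of_nonneg_right (sq_le_pi_sq_div_two_mul_one_sub_cos (abs_le.2 hφ))
      (jacksonKernel_nonneg d φ)
  rw [intervalIntegral.integral_const_mul, integral_one_sub_cos_mul_jacksonKernel] at hmono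
  have hπ := pi_pos
  calc (1 / π) * ∫ φ in (-π)..π, φ ^ 2 * jacksonKernel d φ
      ≤ (1 / π) * (π ^ 2 / 2 * (π - π * cos (π / (d + 2)))) := by gcongr
    _ = π ^ 2 / 2 * (1 - cos (π / (d + 2))) := by field_simp
    _ ≤ π ^ 2 / 2 * ((π / (d + 2)) ^ 2 / 2) := by
        gcongr; linarith [one_sub_sq_div_two_le_cos (x := π / (d + 2))]
    _ = π ^ 4 / (4 * (d + 2) ^ 2) := by field_simp; ring

/-- `(1/π)·∫_{−π}^{π} φ²·u_d(φ) dφ ≤ π⁴/(4(d+2)²)` for `d ≥ 2`. -/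
theorem jacksonKernel_second_moment (d : ℕ) (hd : 2 ≤ d) :
    (1 / π) * ∫ φ in (-π)..π, φ ^ 2 * jacksonKernel d φ ≤ π ^ 4 / (4 * (d + 2) ^ 2) :=
  jacksonKernel_second_moment_general d
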